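/- Fix d ≥ 2. There exists a monotone function φ: [0,1] → ℝ with values such that ∑_{p=1}^d 3^{-p} φ(x_p) always lies in the Cantor set, and such that for every function f: [0,1]^d → ℝ there exists g: C → ℝ with f(x_1,...,x_d) = g(∑_{p=1}^d 3^{-p} φ(x_p)) for all (x_1,...,x_d) ∈ [0,1]^d. -/

import Mathlib

/-!
Write each coordinate in binary, `x_p = 0.a^p_1 a^p_2 …`. Then `∑_p 3^{-p} φ(x_p)` is the ternary
number whose digit at position `d (j - 1) + p` is `2 a^p_j`: all of its digits are `0` or `2`, so it
lies in the Cantor set, and since such ternary expansions are unique it determines every `a^p_j`,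
hence `x`. So `x ↦ ∑_p 3^{-p} φ(x_p)` is injective on the cube and `g` is `f` composed with a left
inverse. For monotonicity, if `x < y` then at the first binary digit where they differ `x` has `0`
and `y` has `1`; the corresponding base-`3^d` digits of `φ x` and `φ y` are `0` and `2`, and the
later digits cannot make up for that.
-/

open Set Filter Topology MeasureTheory

noncomputable section

/-- The unit cube `[0,1]^d`. -/
def cube (d : ℕ) : Set (Fin d → ℝ) := {x | ∀ p, x p ∈ Set.Icc (0:ℝ) 1}

/-- The Cantor middle-thirds set: reals admitting a ternary expansion with digits in `{0,2}`. -/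
def CantorSet : Set ℝ :=
  {y | ∃ t : ℕ → ℕ, (∀ j, t j = 0 ∨ t j = 2) ∧ y = ∑' j : ℕ, (t j : ℝ) / 3 ^ (j + 1)}

/-- `a` assigns to each `x ∈ [0,1]` a fixed binary expansion (`a x j` is the digit `a_{j+1}^x`). -/
def IsBinaryExp (a : ℝ → ℕ → ℕ) : Prop :=
  ∀ x ∈ Set.Icc (0:ℝ) 1, (∀ j, a x j ≤ 1) ∧ x = ∑' j : ℕ, (a x j : ℝ) / 2 ^ (j + 1)

/-- `φ(x) = ∑_{j≥1} 2 a_j^x 3^{-d(j-1)}`. -/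
def phiFun (d : ℕ) (a : ℝ → ℕ → ℕ) (x : ℝ) : ℝ := ∑' j : ℕ, (2 * a x j : ℝ) / 3 ^ (d * j)

/-- `Φ(x_1,…,x_d) = ∑_{p=1}^d 3^{-p} φ(x_p)`. -/
def PhiFun (d : ℕ) (a : ℝ → ℕ → ℕ) (x : Fin d → ℝ) : ℝ :=
  ∑ p : Fin d, phiFun d a (x p) / 3 ^ ((p : ℕ) + 1)

open Real

namespace Real

theorem ofDigits_le_ofDigits_of_lex {b : ℕ} {u v : ℕ → Fin b} {k : ℕ}
    (heq : ∀ i < k, u i = v i) (hk : (u k : ℕ) + 1 ≤ v k) : ofDigits u ≤ ofDigits v := by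
  have hprefix : ∑ i ∈ Finset.range k, ofDigitsTerm u i = ∑ i ∈ Finset.range k, ofDigitsTerm v i :=
    Finset.sum_congr rfl fun i hi ↦ by simp only [ofDigitsTerm, heq i (Finset.mem_range.mp hi)]
  rw [ofDigits_eq_sum_add_ofDigits u (k + 1), ofDigits_eq_sum_add_ofDigits v (k + 1),
    Finset.sum_range_succ, Finset.sum_range_succ, hprefix]
  set c := ((b : ℝ) ^ (k + 1))⁻¹
  have hc : 0 ≤ c := by positivity
  have hdigit : ((u k : ℝ) + 1) * c ≤ v k * c :=
    mul_le_mul_of_nonneg_right (by exact_mod_cast hk) hc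
  have htail_u : c * ofDigits (fun i ↦ u (i + (k + 1))) ≤ c :=
    mul_le_of_le_one_right hc (ofDigits_le_one _)
  have htail_v : 0 ≤ c * ofDigits (fun i ↦ v (i + (k + 1))) :=
    mul_nonneg hc (ofDigits_nonneg _)
  simp only [ofDigitsTerm]
  linarith

theorem exists_lex_of_ofDigits_lt {b : ℕ} {u v : ℕ → Fin b} (h : ofDigits u < ofDigits v) :
    ∃ k, (∀ i < k, u i = v i) ∧ u k < v k := by
  classical
  have hne : ∃ i, u i ≠ v i := Function.ne_iff.mp fun huv ↦ h.ne (by rw [huv])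
  refine ⟨Nat.find hne, fun i hi ↦ not_not.mp (Nat.find_min hne hi), ?_⟩
  refine (lt_or_gt_of_ne (Nat.find_spec hne)).resolve_right fun hvu ↦ h.not_ge ?_
  exact ofDigits_le_ofDigits_of_lex (fun i hi ↦ (not_not.mp (Nat.find_min hne hi)).symm) hvu

end Real

-- `Real.digits 1 2` is identically `0`, so `1` gets the expansion `0.111…` instead.
def binaryDigits (x : ℝ) : ℕ → Fin 2 := if x = 1 then fun _ ↦ 1 else digits x 2

theorem ofDigits_binaryDigits {x : ℝ} (hx : x ∈ Icc 0 1) : ofDigits (binaryDigits x) = x := by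
  unfold binaryDigits
  split_ifs with h
  · subst h
    exact ofDigits_const_last_eq_one 1
  · exact ofDigits_digits one_lt_two ⟨hx.1, hx.2.lt_of_ne h⟩

def binaryExp (x : ℝ) (j : ℕ) : ℕ := binaryDigits x j

theorem val_zero_two_apply (b : Fin 2) : ((![0, 2] : Fin 2 → Fin 3) b : ℕ) = 2 * b := by
  fin_cases b <;> rfl

section

variable {d : ℕ} [NeZero d]

variable (d) in
def phiDigits (x : ℝ) (j : ℕ) : Fin (3 ^ d) := Fin.ofNat _ (2 * binaryDigits x j)

theorem val_phiDigits (x : ℝ) (j : ℕ) : (phiDigits d x j : ℕ) = 2 * binaryDigits x j := by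
  have h3 : 3 ≤ 3 ^ d := Nat.le_self_pow (NeZero.ne d) 3
  have h1 := (binaryDigits x j).isLt
  rw [phiDigits, Fin.val_ofNat, Nat.mod_eq_of_lt (by omega)]

theorem hasSum_phiFun (x : ℝ) :
    HasSum (fun j ↦ (2 * binaryExp x j : ℝ) / 3 ^ (d * j)) (3 ^ d * ofDigits (phiDigits d x)) := by
  refine ((summable_ofDigitsTerm (digits := phiDigits d x)).hasSum.mul_left (3 ^ d)).congr_fun
    fun j ↦ ?_
  rw [ofDigitsTerm, val_phiDigits, binaryExp]
  push_cast
  rw [← pow_mul, mul_add_one, pow_add]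
  field_simp

theorem phiFun_eq_ofDigits (x : ℝ) : phiFun d binaryExp x = 3 ^ d * ofDigits (phiDigits d x) :=
  (hasSum_phiFun x).tsum_eq

theorem monotoneOn_phiFun : MonotoneOn (phiFun d binaryExp) (Icc 0 1) := by
  intro x hx y hy hxy
  rcases hxy.eq_or_lt with rfl | hlt
  · rfl
  obtain ⟨k, heq, hk⟩ := exists_lex_of_ofDigits_lt
    (by rwa [ofDigits_binaryDigits hx, ofDigits_binaryDigits hy] :
      ofDigits (binaryDigits x) < ofDigits (binaryDigits y))
  rw [phiFun_eq_ofDigits, phiFun_eq_ofDigits]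
  gcongr
  refine ofDigits_le_ofDigits_of_lex (fun i hi ↦ by rw [phiDigits, phiDigits, heq i hi]) ?_
  rw [val_phiDigits, val_phiDigits]
  omega

variable (d) in
def cantorDigits (x : Fin d → ℝ) (k : ℕ) : Fin 3 :=
  ![0, 2] (binaryDigits (x (Nat.divModEquiv d k).2) (Nat.divModEquiv d k).1)

theorem cantorDigits_divModEquiv_symm (x : Fin d → ℝ) (j : ℕ) (p : Fin d) :
    cantorDigits d x ((Nat.divModEquiv d).symm (j, p)) = ![0, 2] (binaryDigits (x p) j) := by
  simp only [cantorDigits, Equiv.apply_symm_apply]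

theorem val_cantorDigits (x : Fin d → ℝ) (k : ℕ) :
    (cantorDigits d x k : ℕ) = 0 ∨ (cantorDigits d x k : ℕ) = 2 := by
  have := (binaryDigits (x (Nat.divModEquiv d k).2) (Nat.divModEquiv d k).1).isLt
  rw [cantorDigits, val_zero_two_apply]
  omega

theorem cantorDigits_ne_one (x : Fin d → ℝ) (k : ℕ) : cantorDigits d x k ≠ 1 := by
  intro h
  simpa [h] using val_cantorDigits x k

theorem PhiFun_eq_ofDigits (x : Fin d → ℝ) :
    PhiFun d binaryExp x = ofDigits (cantorDigits d x) := by
  have hrows : HasSum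
      (fun j ↦ ∑ p : Fin d, (2 * binaryExp (x p) j : ℝ) / 3 ^ (d * j) / 3 ^ ((p : ℕ) + 1))
      (PhiFun d binaryExp x) :=
    hasSum_sum fun p _ ↦ by
      rw [phiFun_eq_ofDigits]
      exact (hasSum_phiFun (x p)).div_const _
  have hblocks : HasSum
      (fun j ↦ ∑ p : Fin d, ofDigitsTerm (cantorDigits d x) ((Nat.divModEquiv d).symm (j, p)))
      (ofDigits (cantorDigits d x)) :=
    ((Nat.divModEquiv d).symm.hasSum_iff.mpr summable_ofDigitsTerm.hasSum).prod_fiberwise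
      fun j ↦ hasSum_fintype _
  refine hrows.unique (hblocks.congr_fun fun j ↦ Finset.sum_congr rfl fun p _ ↦ ?_)
  rw [ofDigitsTerm, cantorDigits_divModEquiv_symm, val_zero_two_apply, Nat.divModEquiv_symm_apply,
    binaryExp]
  push_cast
  rw [show j * d + (p : ℕ) + 1 = d * j + (p : ℕ) + 1 by ring, pow_succ, pow_add]
  field_simp
  ring

theorem PhiFun_mem_cantorSet (x : Fin d → ℝ) : PhiFun d binaryExp x ∈ CantorSet := by
  refine ⟨fun k ↦ cantorDigits d x k, val_cantorDigits x, ?_⟩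
  rw [PhiFun_eq_ofDigits, ofDigits]
  exact tsum_congr fun k ↦ by simp [ofDigitsTerm, div_eq_mul_inv]

theorem injOn_PhiFun : InjOn (PhiFun d binaryExp) (cube d) := by
  intro x hx y hy hxy
  have hdigits := ofDigits_zero_two_sequence_unique (cantorDigits_ne_one x) (cantorDigits_ne_one y)
    (by rwa [← PhiFun_eq_ofDigits, ← PhiFun_eq_ofDigits])
  funext p
  rw [← ofDigits_binaryDigits (hx p), ← ofDigits_binaryDigits (hy p)]
  congr 1
  funext j
  have := congrArg (fun t ↦ (t ((Nat.divModEquiv d).symm (j, p)) : ℕ)) hdigits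
  simp only [cantorDigits_divModEquiv_symm, val_zero_two_apply] at this
  exact Fin.ext (by omega)

end

/-- Fix `d ≥ 2`. There exists a monotone `φ : [0,1] → ℝ` such that
`∑_{p=1}^d 3^{-p} φ(x_p)` always lies in the Cantor set and such that every
`f : [0,1]^d → ℝ` admits an outer function `g` (on the Cantor set) with
`f(x_1,…,x_d) = g(∑_{p=1}^d 3^{-p} φ(x_p))` on `[0,1]^d`. -/
theorem stmt6 (d : ℕ) (hd : 2 ≤ d) :
    ∃ φ : ℝ → ℝ, MonotoneOn φ (Set.Icc 0 1) ∧
      (∀ x : Fin d → ℝ, x ∈ cube d →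
        (∑ p : Fin d, φ (x p) / 3 ^ ((p : ℕ) + 1)) ∈ CantorSet) ∧
      ∀ f : (Fin d → ℝ) → ℝ, ∃ g : ℝ → ℝ,
        ∀ x ∈ cube d, f x = g (∑ p : Fin d, φ (x p) / 3 ^ ((p : ℕ) + 1)) := by
  have : NeZero d := ⟨by omega⟩
  refine ⟨phiFun d binaryExp, monotoneOn_phiFun, fun x _ ↦ PhiFun_mem_cantorSet x,
    fun f ↦ ⟨f ∘ Function.invFunOn (PhiFun d binaryExp) (cube d), fun x hx ↦ ?_⟩⟩
  exact congrArg f (injOn_PhiFun.leftInvOn_invFunOn hx).symm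

end
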